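/- arXiv:1703.06391 — 7 statements merged into one kernel-verified Lean document; each statement's English description precedes it below -/
import Mathlib

section
/- In propositional multirole logic MRL, the weakening rule is admissible: if the sequent Γ is derivable, then so is Γ together with any additional i-formula ⟨R⟩A. -/
/-- Formulas of propositional multirole logic over role set `ρ`:
atoms, generalized negation `¬_f`, and conjunction `∧_U`. -/
inductive MFormula (ρ : Type) : Type where
  | atom : ℕ → MFormula ρ
  | neg  : (ρ → ρ) → MFormula ρ → MFormula ρ
  | conj : Ultrafilter ρ → MFormula ρ → MFormula ρ → MFormula ρ

/-- Sequents: multisets of i-formulas `⟨R⟩A`. -/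
abbrev MSeq (ρ : Type) := Multiset (Set ρ × MFormula ρ)

/-- Derivability in propositional MRL. -/
inductive MDeriv {ρ : Type} : MSeq ρ → Prop where
  | id (Γ : MSeq ρ) (a : ℕ) (L : List (Set ρ)) :
      L.Pairwise Disjoint → (⋃ R ∈ L, R) = Set.univ →
      MDeriv (Γ + (↑(L.map fun R => ((R, MFormula.atom a) : Set ρ × MFormula ρ)) : MSeq ρ))
  | contract (Γ : MSeq ρ) (R : Set ρ) (A : MFormula ρ) :
      MDeriv ((R, A) ::ₘ (R, A) ::ₘ Γ) → MDeriv ((R, A) ::ₘ Γ)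
  | neg (Γ : MSeq ρ) (R : Set ρ) (f : ρ → ρ) (A : MFormula ρ) :
      MDeriv ((f ⁻¹' R, A) ::ₘ Γ) → MDeriv ((R, MFormula.neg f A) ::ₘ Γ)
  | conj_neg_l (Γ : MSeq ρ) (R : Set ρ) (U : Ultrafilter ρ) (A B : MFormula ρ) :
      R ∉ U → MDeriv ((R, A) ::ₘ Γ) → MDeriv ((R, MFormula.conj U A B) ::ₘ Γ)
  | conj_neg_r (Γ : MSeq ρ) (R : Set ρ) (U : Ultrafilter ρ) (A B : MFormula ρ) :
      R ∉ U → MDeriv ((R, B) ::ₘ Γ) → MDeriv ((R, MFormula.conj U A B) ::ₘ Γ)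
  | conj_pos (Γ : MSeq ρ) (R : Set ρ) (U : Ultrafilter ρ) (A B : MFormula ρ) :
      R ∈ U → MDeriv ((R, A) ::ₘ Γ) → MDeriv ((R, B) ::ₘ Γ) →
      MDeriv ((R, MFormula.conj U A B) ::ₘ Γ)

/-- Weakening is admissible in MRL. -/
theorem mrl_weakening {ρ : Type} (Γ : MSeq ρ) (R : Set ρ) (A : MFormula ρ)
    (h : MDeriv Γ) : MDeriv ((R, A) ::ₘ Γ) := by
  induction h with
  | id Γ' a L hp hu =>
    have := MDeriv.id ((R, A) ::ₘ Γ') a L hp hu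
    simpa [Multiset.cons_add] using this
  | contract Γ' R' A' _ ih =>
    have e : (R, A) ::ₘ (R', A') ::ₘ (R', A') ::ₘ Γ'
        = (R', A') ::ₘ (R', A') ::ₘ (R, A) ::ₘ Γ' := by
      rw [Multiset.cons_swap, Multiset.cons_swap (R, A)]
    rw [e] at ih
    rw [Multiset.cons_swap]
    exact MDeriv.contract _ _ _ ih
  | neg Γ' R' f A' _ ih =>
    rw [Multiset.cons_swap] at ih
    rw [Multiset.cons_swap]
    exact MDeriv.neg _ _ _ _ ih
  | conj_neg_l Γ' R' U A' B' hU _ ih =>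
    rw [Multiset.cons_swap] at ih
    rw [Multiset.cons_swap]
    exact MDeriv.conj_neg_l _ _ _ _ _ hU ih
  | conj_neg_r Γ' R' U A' B' hU _ ih =>
    rw [Multiset.cons_swap] at ih
    rw [Multiset.cons_swap]
    exact MDeriv.conj_neg_r _ _ _ _ _ hU ih
  | conj_pos Γ' R' U A' B' hU _ _ ih1 ih2 =>
    rw [Multiset.cons_swap] at ih1 ih2
    rw [Multiset.cons_swap]
    exact MDeriv.conj_pos _ _ _ _ _ hU ih1 ih2
end

section
/- In propositional multirole logic MRL, for every formula A and sequent Γ, the sequent Γ, ⟨R₀⟩A is derivable, where R₀ is the full set of roles. -/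
/-- Γ, ⟨R₀⟩A is derivable for every formula A, where R₀ (= univ) is the full role set. -/
theorem mrl_full_set {ρ : Type} (Γ : MSeq ρ) (A : MFormula ρ) :
    MDeriv ((Set.univ, A) ::ₘ Γ) := by
  induction A generalizing Γ with
  | atom a =>
      have h := MDeriv.id Γ a [Set.univ] (by simp) (by simp)
      simpa [← Multiset.singleton_add, add_comm] using h
  | neg f A ih =>
      exact MDeriv.neg Γ _ f A (by simpa using ih Γ)
  | conj U A B ihA ihB =>
      exact MDeriv.conj_pos Γ _ U A B (Filter.univ_mem) (ihA Γ) (ihB Γ)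
end

section
/- In propositional multirole logic MRL, the 1-cut rule is admissible: if Γ, ⟨∅⟩A is derivable, then Γ is derivable. -/
/- Deleting i-formulas at the empty role set preserves derivability, by induction on the
derivation. When a deleted formula is principal, its active formulas again sit at the empty role
set (`f⁻¹(∅) = ∅`) and are deleted as well; `(∧-pos)` cannot have such a principal formula since
`∅ ∉ U`, and an `(Id)` axiom stays one because `∅` adds nothing to the union of its role sets.
Deleting a whole multiset at once, rather than a single formula, is what makes the `(Contract)`
case go through. -/

theorem Multiset.cons_eq_add_cases {α : Type*} {a : α} {s t u : Multiset α}
    (h : a ::ₘ s = t + u) :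
    (∃ t', t = a ::ₘ t' ∧ s = t' + u) ∨ (∃ u', u = a ::ₘ u' ∧ s = t + u') := by
  rcases Multiset.mem_add.1 (h ▸ Multiset.mem_cons_self a s) with ht | hu
  · obtain ⟨t', rfl⟩ := Multiset.exists_cons_of_mem ht
    exact .inl ⟨t', rfl, by rwa [Multiset.cons_add, Multiset.cons_inj_right] at h⟩
  · obtain ⟨u', rfl⟩ := Multiset.exists_cons_of_mem hu
    exact .inr ⟨u', rfl, by rwa [Multiset.add_cons, Multiset.cons_inj_right] at h⟩

theorem List.biUnion_erase_empty {α : Type*} (L : List (Set α)) :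
    (⋃ R ∈ L.erase ∅, R) = ⋃ R ∈ L, R := by
  ext x
  simp only [Set.mem_iUnion, exists_prop]
  refine ⟨fun ⟨R, hR, hx⟩ => ⟨R, L.mem_of_mem_erase hR, hx⟩, fun ⟨R, hR, hx⟩ => ?_⟩
  exact ⟨R, L.mem_erase_of_ne (Set.nonempty_of_mem hx).ne_empty |>.2 hR, hx⟩

section

variable {ρ : Type}

def MSeq.PrunesTo (Δ Γ : MSeq ρ) : Prop :=
  ∃ S : MSeq ρ, (∀ p ∈ S, p.1 = ∅) ∧ Δ = S + Γ

theorem MSeq.PrunesTo.cons_of_empty {Δ Γ : MSeq ρ} {p : Set ρ × MFormula ρ} (hp : p.1 = ∅)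
    (h : Δ.PrunesTo Γ) : MSeq.PrunesTo (p ::ₘ Δ) Γ := by
  obtain ⟨S, hS, rfl⟩ := h
  refine ⟨p ::ₘ S, ?_, (Multiset.cons_add p S Γ).symm⟩
  simpa only [Multiset.forall_mem_cons] using ⟨hp, hS⟩

theorem MSeq.PrunesTo.cons {Δ Γ : MSeq ρ} (p : Set ρ × MFormula ρ) (h : Δ.PrunesTo Γ) :
    MSeq.PrunesTo (p ::ₘ Δ) (p ::ₘ Γ) := by
  obtain ⟨S, hS, rfl⟩ := h
  exact ⟨S, hS, (Multiset.add_cons p S Γ).symm⟩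

theorem MSeq.PrunesTo.cons_cases {Δ Γ : MSeq ρ} {p : Set ρ × MFormula ρ}
    (h : MSeq.PrunesTo (p ::ₘ Δ) Γ) :
    (p.1 = ∅ ∧ Δ.PrunesTo Γ) ∨ ∃ Γ', Γ = p ::ₘ Γ' ∧ Δ.PrunesTo Γ' := by
  obtain ⟨S, hS, hΔ⟩ := h
  rcases Multiset.cons_eq_add_cases hΔ with ⟨S', rfl, hS'⟩ | ⟨Γ', rfl, hΓ'⟩
  · rw [Multiset.forall_mem_cons] at hS
    exact .inl ⟨hS.1, S', hS.2, hS'⟩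
  · exact .inr ⟨Γ', rfl, S, hS, hΓ'⟩

def MSeq.IsAxiom (Δ : MSeq ρ) : Prop :=
  ∃ (Γ : MSeq ρ) (a : ℕ) (L : List (Set ρ)), L.Pairwise Disjoint ∧ (⋃ R ∈ L, R) = Set.univ ∧
    Δ = Γ + (↑(L.map fun R => ((R, MFormula.atom a) : Set ρ × MFormula ρ)) : MSeq ρ)

theorem MSeq.IsAxiom.mderiv {Δ : MSeq ρ} (h : Δ.IsAxiom) : MDeriv Δ := by
  obtain ⟨Γ, a, L, hd, hu, rfl⟩ := h
  exact .id Γ a L hd hu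

theorem MSeq.IsAxiom.of_cons_empty {Γ : MSeq ρ} {p : Set ρ × MFormula ρ} (hp : p.1 = ∅)
    (h : MSeq.IsAxiom (p ::ₘ Γ)) : Γ.IsAxiom := by
  obtain ⟨Γ₀, a, L, hd, hu, hΓ⟩ := h
  rcases Multiset.cons_eq_add_cases hΓ with ⟨Γ₀', -, rfl⟩ | ⟨M, hM, rfl⟩
  · exact ⟨Γ₀', a, L, hd, hu, rfl⟩
  · obtain ⟨R, hR, rfl⟩ := List.mem_map.1 (Multiset.mem_coe.1 (hM ▸ Multiset.mem_cons_self _ M))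
    obtain rfl : R = ∅ := hp
    refine ⟨Γ₀, a, L.erase ∅, hd.sublist L.erase_sublist, L.biUnion_erase_empty ▸ hu, ?_⟩
    suffices M = ↑((L.erase ∅).map fun R => ((R, MFormula.atom a) : Set ρ × MFormula ρ)) by
      rw [this]
    rw [← Multiset.cons_inj_right (∅, MFormula.atom a), ← hM, Multiset.cons_coe,
      Multiset.coe_eq_coe]
    exact (List.perm_cons_erase hR).map _

theorem MSeq.IsAxiom.of_prunesTo {Δ Γ : MSeq ρ} (h : Δ.IsAxiom) (hΓ : Δ.PrunesTo Γ) :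
    Γ.IsAxiom := by
  obtain ⟨S, hS, rfl⟩ := hΓ
  induction S using Multiset.induction_on with
  | empty => rwa [zero_add] at h
  | cons p S ih =>
    rw [Multiset.forall_mem_cons] at hS
    rw [Multiset.cons_add] at h
    exact ih hS.2 (h.of_cons_empty hS.1)

theorem MDeriv.of_prunesTo {Δ Γ : MSeq ρ} (h : MDeriv Δ) (hΓ : Δ.PrunesTo Γ) : MDeriv Γ := by
  induction h generalizing Γ with
  | id Γ₀ a L hd hu => exact (MSeq.IsAxiom.of_prunesTo ⟨Γ₀, a, L, hd, hu, rfl⟩ hΓ).mderiv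
  | contract Γ₀ R A _ ih =>
    rcases hΓ.cons_cases with ⟨hR, hΓ₀⟩ | ⟨Γ', rfl, hΓ'⟩
    · exact ih ((hΓ₀.cons_of_empty hR).cons_of_empty hR)
    · exact .contract Γ' R A (ih ((hΓ'.cons _).cons _))
  | neg Γ₀ R f A _ ih =>
    rcases hΓ.cons_cases with ⟨hR, hΓ₀⟩ | ⟨Γ', rfl, hΓ'⟩
    · obtain rfl : R = ∅ := hR
      exact ih (hΓ₀.cons_of_empty Set.preimage_empty)
    · exact .neg Γ' R f A (ih (hΓ'.cons _))
  | conj_neg_l Γ₀ R U A B hU _ ih =>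
    rcases hΓ.cons_cases with ⟨hR, hΓ₀⟩ | ⟨Γ', rfl, hΓ'⟩
    · exact ih (hΓ₀.cons_of_empty hR)
    · exact .conj_neg_l Γ' R U A B hU (ih (hΓ'.cons _))
  | conj_neg_r Γ₀ R U A B hU _ ih =>
    rcases hΓ.cons_cases with ⟨hR, hΓ₀⟩ | ⟨Γ', rfl, hΓ'⟩
    · exact ih (hΓ₀.cons_of_empty hR)
    · exact .conj_neg_r Γ' R U A B hU (ih (hΓ'.cons _))
  | conj_pos Γ₀ R U A B hU _ _ ihA ihB =>
    rcases hΓ.cons_cases with ⟨hR, -⟩ | ⟨Γ', rfl, hΓ'⟩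
    · exact absurd ((hR : R = ∅) ▸ hU) U.empty_notMem
    · exact .conj_pos Γ' R U A B hU (ihA (hΓ'.cons _)) (ihB (hΓ'.cons _))

end

/-- 1-cut is admissible in MRL: an i-formula interpreted at the empty role set can be dropped. -/
theorem mrl_one_cut {ρ : Type} (Γ : MSeq ρ) (A : MFormula ρ)
    (h : MDeriv ((∅, A) ::ₘ Γ)) : MDeriv Γ := by
  exact h.of_prunesTo ⟨{(∅, A)}, by simp, (Multiset.singleton_add _ _).symm⟩
end

section
/- In propositional multirole logic MRL, identity expansion holds: for every formula A, every sequent Γ, and every subset R of R₀, the sequent Γ, ⟨R⟩A, ⟨R₀ \ R⟩A is derivable. -/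
/-- Identity expansion: Γ, ⟨R⟩A, ⟨R₀ \ R⟩A is always derivable. -/
theorem mrl_id_expansion {ρ : Type} (Γ : MSeq ρ) (R : Set ρ) (A : MFormula ρ) :
    MDeriv ((R, A) ::ₘ (Rᶜ, A) ::ₘ Γ) := by
  induction A generalizing Γ R with
  | atom a =>
    have h := MDeriv.id Γ a [R, Rᶜ]
      (by simp [List.pairwise_cons, Set.disjoint_compl_right_iff_subset])
      (by simp)
    have e : Γ + ↑([R, Rᶜ].map fun S => ((S, MFormula.atom a) : Set ρ × MFormula ρ))
        = (R, MFormula.atom a) ::ₘ (Rᶜ, MFormula.atom a) ::ₘ Γ := by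
      rw [add_comm]; simp [← Multiset.cons_coe, Multiset.cons_add]
    rwa [e] at h
  | neg f B ih =>
    apply MDeriv.neg
    rw [Multiset.cons_swap]
    apply MDeriv.neg
    rw [Multiset.cons_swap]
    have : f ⁻¹' Rᶜ = (f ⁻¹' R)ᶜ := rfl
    rw [this]
    exact ih _ _
  | conj U B C ihB ihC =>
    by_cases hR : R ∈ U
    · have hRc : Rᶜ ∉ U := by simp [Ultrafilter.compl_mem_iff_notMem, hR]
      apply MDeriv.conj_pos _ _ _ _ _ hR
      · rw [Multiset.cons_swap]
        apply MDeriv.conj_neg_l _ _ _ _ _ hRc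
        rw [Multiset.cons_swap]; exact ihB _ _
      · rw [Multiset.cons_swap]
        apply MDeriv.conj_neg_r _ _ _ _ _ hRc
        rw [Multiset.cons_swap]; exact ihC _ _
    · have hRc : Rᶜ ∈ U := (Ultrafilter.compl_mem_iff_notMem).2 hR
      rw [Multiset.cons_swap]
      apply MDeriv.conj_pos _ _ _ _ _ hRc
      · rw [Multiset.cons_swap]
        apply MDeriv.conj_neg_l _ _ _ _ _ hR
        exact ihB _ _
      · rw [Multiset.cons_swap]
        apply MDeriv.conj_neg_r _ _ _ _ _ hR
        exact ihC _ _
end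

section
/- In propositional multirole logic MRL, multiparty cut (mp-cut) is admissible: for n ≥ 1, if R₁, ..., Rₙ ⊆ R₀ satisfy that the complements R₀ \ R₁, ..., R₀ \ Rₙ are pairwise disjoint with union R₀, and each sequent Γᵢ, ⟨Rᵢ⟩A is derivable, then the sequent Γ₁, ..., Γₙ is derivable. -/
/-!
Cut is eliminated for all `n` premises at once, by induction on the cut formula and, inside
it, on the vector of derivation heights ordered pointwise. Because of contraction a premise may
carry several copies of its cut formula `⟨Rᵢ⟩A`. If some premise does not end with the rule
introducing a copy, its last rule is permuted below the cut (a contraction on a copy only adds a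
copy). Otherwise all premises are principal. For an atom, the `id` axioms glue together along the
partition of the roles into the complements `Rᵢᶜ`. For `¬_f B` and `B ∧_U C`, the other copies in
premise `i` are first cut away against the remaining premises, which leaves the immediate
subformula next to the whole context `Γ₁, …, Γₙ`; the induction hypothesis for that subformula
then yields `n` copies of this context, and contraction finishes. For `∧_U` exactly one
complement `Rⱼᶜ` lies in `U`, and the conjunct chosen by premise `j` is the one all premises share.
-/

section

open Set Multiset

variable {ρ : Type}

def MSeq.atoms (L : List (Set ρ)) (a : ℕ) : MSeq ρ :=
  ↑(L.map fun R => ((R, MFormula.atom a) : Set ρ × MFormula ρ))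

theorem MSeq.atoms_flatMap {ι : Type*} (l : List ι) (L : ι → List (Set ρ)) (a : ℕ) :
    MSeq.atoms (l.flatMap L) a = (l.map fun i => MSeq.atoms (L i) a).sum := by
  induction l with
  | nil => rfl
  | cons i l ih =>
    rw [List.flatMap_cons, List.map_cons, List.sum_cons, ← ih]
    simp [MSeq.atoms]

namespace Multiset

variable {α : Type*}

theorem le_of_le_add_replicate {s t : Multiset α} {c : α} {k : ℕ} (h : s ≤ t + replicate k c)
    (hc : c ∉ s) : s ≤ t := by
  classical
  rw [le_iff_count] at h ⊢
  intro a
  by_cases hac : a = c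
  · subst hac; simp [count_eq_zero.2 hc]
  · simpa [count_replicate, Ne.symm hac] using h a

theorem cons_eq_add_replicate_succ {x c : α} {Γ Δ : Multiset α} {k : ℕ}
    (h : x ::ₘ Δ = Γ + replicate (k + 1) c) :
    x = c ∧ Δ = Γ + replicate k c ∨ ∃ Γ', Γ = x ::ₘ Γ' ∧ Δ = Γ' + replicate (k + 1) c := by
  classical
  rcases mem_add.1 (h ▸ mem_cons_self x Δ) with hx | hx
  · refine .inr ⟨Γ.erase x, (cons_erase hx).symm, (cons_inj_right x).1 ?_⟩
    rw [h, ← cons_add, cons_erase hx]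
  · obtain rfl := eq_of_mem_replicate hx
    exact .inl ⟨rfl, (cons_inj_right x).1 (by rw [h, replicate_succ, add_cons])⟩

end Multiset

namespace MDeriv

theorem of_atoms_le {Γ : MSeq ρ} {a : ℕ} {L : List (Set ρ)} (hL : L.Pairwise Disjoint)
    (hcover : (⋃ R ∈ L, R) = univ) (hle : MSeq.atoms L a ≤ Γ) : MDeriv Γ := by
  classical
  rw [← tsub_add_cancel_of_le hle]
  exact .id _ a L hL hcover

theorem weaken {Γ : MSeq ρ} (d : MDeriv Γ) (Δ : MSeq ρ) : MDeriv (Γ + Δ) := by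
  induction d with
  | id Γ a L hL hcover => rw [add_right_comm]; exact .id _ a L hL hcover
  | contract Γ R A _ ih => rw [cons_add] at ih ⊢; exact .contract _ R A (by rwa [cons_add] at ih)
  | neg Γ R f A _ ih => rw [cons_add] at ih ⊢; exact .neg _ R f A ih
  | conj_neg_l Γ R U A B hR _ ih => rw [cons_add] at ih ⊢; exact .conj_neg_l _ R U A B hR ih
  | conj_neg_r Γ R U A B hR _ ih => rw [cons_add] at ih ⊢; exact .conj_neg_r _ R U A B hR ih
  | conj_pos Γ R U A B hR _ _ ihA ihB =>
    rw [cons_add] at ihA ihB ⊢; exact .conj_pos _ R U A B hR ihA ihB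

theorem contract_add {Γ Δ : MSeq ρ} (d : MDeriv (Γ + Γ + Δ)) : MDeriv (Γ + Δ) := by
  induction Γ using Multiset.induction_on generalizing Δ with
  | empty => simpa using d
  | cons x Γ ih =>
    obtain ⟨R, A⟩ := x
    have d' : MDeriv ((R, A) ::ₘ (R, A) ::ₘ (Γ + Γ + Δ)) := by
      simpa only [cons_add, add_cons] using d
    simpa only [cons_add, add_cons] using ih (Δ := (R, A) ::ₘ Δ) (by
      simpa only [add_cons] using d'.contract)

theorem of_succ_nsmul {Γ : MSeq ρ} {k : ℕ} (d : MDeriv ((k + 1) • Γ)) : MDeriv Γ := by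
  induction k with
  | zero => simpa using d
  | succ k ih =>
    have hk : (k + 1 + 1) • Γ = Γ + Γ + k • Γ := by rw [succ_nsmul, succ_nsmul]; abel
    exact ih (by rw [succ_nsmul']; exact contract_add (hk ▸ d))

-- Derivations of height exactly `h`, the induction measure for cut elimination.
inductive DerivH : ℕ → MSeq ρ → Prop where
  | id (Γ : MSeq ρ) (a : ℕ) (L : List (Set ρ)) :
      L.Pairwise Disjoint → (⋃ R ∈ L, R) = univ → DerivH 0 (Γ + MSeq.atoms L a)
  | contract {h : ℕ} (Γ : MSeq ρ) (R : Set ρ) (A : MFormula ρ) :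
      DerivH h ((R, A) ::ₘ (R, A) ::ₘ Γ) → DerivH (h + 1) ((R, A) ::ₘ Γ)
  | neg {h : ℕ} (Γ : MSeq ρ) (R : Set ρ) (f : ρ → ρ) (A : MFormula ρ) :
      DerivH h ((f ⁻¹' R, A) ::ₘ Γ) → DerivH (h + 1) ((R, MFormula.neg f A) ::ₘ Γ)
  | conj_neg_l {h : ℕ} (Γ : MSeq ρ) (R : Set ρ) (U : Ultrafilter ρ) (A B : MFormula ρ) :
      R ∉ U → DerivH h ((R, A) ::ₘ Γ) → DerivH (h + 1) ((R, MFormula.conj U A B) ::ₘ Γ)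
  | conj_neg_r {h : ℕ} (Γ : MSeq ρ) (R : Set ρ) (U : Ultrafilter ρ) (A B : MFormula ρ) :
      R ∉ U → DerivH h ((R, B) ::ₘ Γ) → DerivH (h + 1) ((R, MFormula.conj U A B) ::ₘ Γ)
  | conj_pos {h₁ h₂ : ℕ} (Γ : MSeq ρ) (R : Set ρ) (U : Ultrafilter ρ) (A B : MFormula ρ) :
      R ∈ U → DerivH h₁ ((R, A) ::ₘ Γ) → DerivH h₂ ((R, B) ::ₘ Γ) →
      DerivH (max h₁ h₂ + 1) ((R, MFormula.conj U A B) ::ₘ Γ)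

theorem DerivH.mderiv {h : ℕ} {Γ : MSeq ρ} (d : DerivH h Γ) : MDeriv Γ := by
  induction d with
  | id Γ a L hL hcover => exact .id Γ a L hL hcover
  | contract Γ R A _ ih => exact .contract Γ R A ih
  | neg Γ R f A _ ih => exact .neg Γ R f A ih
  | conj_neg_l Γ R U A B hR _ ih => exact .conj_neg_l Γ R U A B hR ih
  | conj_neg_r Γ R U A B hR _ ih => exact .conj_neg_r Γ R U A B hR ih
  | conj_pos Γ R U A B hR _ _ ihA ihB => exact .conj_pos Γ R U A B hR ihA ihB

theorem exists_derivH {Γ : MSeq ρ} (d : MDeriv Γ) : ∃ h, DerivH h Γ := by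
  induction d with
  | id Γ a L hL hcover => exact ⟨0, .id Γ a L hL hcover⟩
  | contract Γ R A _ ih => obtain ⟨_, d⟩ := ih; exact ⟨_, .contract Γ R A d⟩
  | neg Γ R f A _ ih => obtain ⟨_, d⟩ := ih; exact ⟨_, .neg Γ R f A d⟩
  | conj_neg_l Γ R U A B hR _ ih => obtain ⟨_, d⟩ := ih; exact ⟨_, .conj_neg_l Γ R U A B hR d⟩
  | conj_neg_r Γ R U A B hR _ ih => obtain ⟨_, d⟩ := ih; exact ⟨_, .conj_neg_r Γ R U A B hR d⟩
  | conj_pos Γ R U A B hR _ _ ihA ihB =>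
    obtain ⟨⟨_, dA⟩, ⟨_, dB⟩⟩ := And.intro ihA ihB
    exact ⟨_, .conj_pos Γ R U A B hR dA dB⟩

/-- `Introduces P (R, A)`: `A` is compound and `P` holds of the active formulas of the premises
of one logical rule with conclusion `⟨R⟩A`. -/
def Introduces (P : Set ρ × MFormula ρ → Prop) : Set ρ × MFormula ρ → Prop
  | (_, .atom _) => False
  | (R, .neg f A) => P (f ⁻¹' R, A)
  | (R, .conj U A B) => R ∉ U ∧ (P (R, A) ∨ P (R, B)) ∨ R ∈ U ∧ P (R, A) ∧ P (R, B)

/-- `Step P Γ x`: `x ::ₘ Γ` follows from premises satisfying `P` by a contraction or a logical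
rule with principal formula `x`. -/
def Step (P : MSeq ρ → Prop) (Γ : MSeq ρ) (x : Set ρ × MFormula ρ) : Prop :=
  P (x ::ₘ x ::ₘ Γ) ∨ Introduces (fun y => P (y ::ₘ Γ)) x

/-- `x ::ₘ Γ` is an `id` axiom with `x` among its atoms; the other atoms partition `x.1ᶜ`. -/
def IsAxiomWith (Γ : MSeq ρ) : Set ρ × MFormula ρ → Prop
  | (R, .atom a) => ∃ L : List (Set ρ), L.Pairwise Disjoint ∧ (⋃ S ∈ L, S) = Rᶜ ∧ MSeq.atoms L a ≤ Γ
  | _ => False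

theorem Introduces.mono {P Q : Set ρ × MFormula ρ → Prop} {x : Set ρ × MFormula ρ}
    (hPQ : ∀ y, P y → Q y) (h : Introduces P x) : Introduces Q x := by
  obtain ⟨R, _ | ⟨f, A⟩ | ⟨U, A, B⟩⟩ := x
  · exact h
  · exact hPQ _ h
  · exact h.imp (.imp_right (.imp (hPQ _) (hPQ _))) (.imp_right (.imp (hPQ _) (hPQ _)))

theorem Step.mono {P Q : MSeq ρ → Prop} {Γ Δ : MSeq ρ} {x : Set ρ × MFormula ρ}
    (h : Step P Γ x) (hPQ : ∀ Θ, P (Θ + Γ) → Q (Θ + Δ)) : Step Q Δ x := by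
  refine h.imp (fun h => ?_) (Introduces.mono fun y h => ?_)
  · simpa only [cons_add, singleton_add] using
      hPQ (x ::ₘ {x}) (by simpa only [cons_add, singleton_add])
  · simpa only [singleton_add] using hPQ {y} (by simpa only [singleton_add])

theorem Step.mderiv {Γ : MSeq ρ} {x : Set ρ × MFormula ρ} (h : Step MDeriv Γ x) :
    MDeriv (x ::ₘ Γ) := by
  obtain ⟨R, A⟩ := x
  rcases h with h | h
  · exact .contract Γ R A h
  obtain _ | ⟨f, A⟩ | ⟨U, A, B⟩ := A
  · exact h.elim
  · exact .neg Γ R f A h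
  · rcases h with ⟨hR, hA | hB⟩ | ⟨hR, hA, hB⟩
    · exact .conj_neg_l Γ R U A B hR hA
    · exact .conj_neg_r Γ R U A B hR hB
    · exact .conj_pos Γ R U A B hR hA hB

theorem DerivH.inversion {h : ℕ} {E : MSeq ρ} (d : DerivH h E) :
    (∃ Γ a L, L.Pairwise Disjoint ∧ (⋃ R ∈ L, R) = univ ∧ E = Γ + MSeq.atoms L a) ∨
    ∃ x Γ, E = x ::ₘ Γ ∧ Step (fun Θ => ∃ h' < h, DerivH h' Θ) Γ x := by
  cases d with
  | id Γ a L hL hcover => exact .inl ⟨Γ, a, L, hL, hcover, rfl⟩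
  | contract Γ R A d => exact .inr ⟨_, Γ, rfl, .inl ⟨_, by omega, d⟩⟩
  | neg Γ R f A d => exact .inr ⟨_, Γ, rfl, .inr ⟨_, by omega, d⟩⟩
  | conj_neg_l Γ R U A B hR d => exact .inr ⟨_, Γ, rfl, .inr (.inl ⟨hR, .inl ⟨_, by omega, d⟩⟩)⟩
  | conj_neg_r Γ R U A B hR d => exact .inr ⟨_, Γ, rfl, .inr (.inl ⟨hR, .inr ⟨_, by omega, d⟩⟩)⟩
  | conj_pos Γ R U A B hR dA dB =>
    exact .inr ⟨_, Γ, rfl, .inr (.inr ⟨hR, ⟨_, by omega, dA⟩, ⟨_, by omega, dB⟩⟩)⟩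

theorem isAxiomWith_of_mem_atoms {Γ Δ : MSeq ρ} {a : ℕ} {L : List (Set ρ)} {R : Set ρ} {k : ℕ}
    (hL : L.Pairwise Disjoint) (hcover : (⋃ S ∈ L, S) = univ) (hR : R ∈ L)
    (hE : Δ + MSeq.atoms L a = Γ + replicate k (R, .atom a)) : IsAxiomWith Γ (R, .atom a) := by
  classical
  refine ⟨L.filter (· ≠ R), hL.sublist List.filter_sublist, ?_, ?_⟩
  · ext y
    simp only [List.mem_filter, decide_eq_true_eq, mem_iUnion, exists_prop, mem_compl_iff]
    constructor
    · rintro ⟨S, ⟨hS, hSR⟩, hy⟩ hyR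
      exact Set.disjoint_left.1 (hL.forall hS hR hSR) hy hyR
    · intro hyR
      obtain ⟨S, hS, hy⟩ := mem_iUnion₂.1 (hcover.symm ▸ mem_univ y : y ∈ ⋃ S ∈ L, S)
      exact ⟨S, ⟨hS, by rintro rfl; exact hyR hy⟩, hy⟩
  · refine le_of_le_add_replicate (le_trans ?_ (hE ▸ le_add_self)) (by simp [MSeq.atoms])
    exact Multiset.coe_le.2 (List.filter_sublist.map _).subperm

theorem DerivH.classify {h k : ℕ} {Γ : MSeq ρ} {c : Set ρ × MFormula ρ}
    (d : DerivH h (Γ + replicate (k + 1) c)) :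
    MDeriv Γ ∨
    (∃ x Γ', Γ = x ::ₘ Γ' ∧ Step (fun Θ => ∃ h' < h, DerivH h' (Θ + replicate (k + 1) c)) Γ' x) ∨
    (∃ h' < h, DerivH h' (Γ + replicate (k + 2) c)) ∨
    IsAxiomWith Γ c ∨ Introduces (fun y => ∃ h' < h, DerivH h' (y ::ₘ (Γ + replicate k c))) c := by
  rcases d.inversion with ⟨Δ, a, L, hL, hcover, hE⟩ | ⟨x, Δ, hE, hstep⟩
  · by_cases hc : c ∈ MSeq.atoms L a
    · obtain ⟨R, hR, rfl⟩ : ∃ R ∈ L, (R, .atom a) = c := by simpa [MSeq.atoms] using hc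
      exact .inr (.inr (.inr (.inl (isAxiomWith_of_mem_atoms hL hcover hR hE.symm))))
    · exact .inl (of_atoms_le hL hcover (le_of_le_add_replicate (hE.symm ▸ le_add_self) hc))
  · rcases cons_eq_add_replicate_succ hE.symm with ⟨rfl, rfl⟩ | ⟨Γ', rfl, rfl⟩
    · refine hstep.elim (fun h => .inr (.inr (.inl ?_))) (fun h => .inr (.inr (.inr (.inr h))))
      simpa only [replicate_succ, add_cons] using h
    · exact .inr (.inl ⟨x, Γ', rfl, hstep.mono fun Θ => by simp only [add_assoc, imp_self]⟩)

section Multicut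

variable {ι : Type*}

def IsCutFamily (Rs : ι → Set ρ) : Prop :=
  Pairwise (fun i j => Disjoint (Rs i)ᶜ (Rs j)ᶜ) ∧ ⋃ i, (Rs i)ᶜ = univ

theorem IsCutFamily.preimage {Rs : ι → Set ρ} (hRs : IsCutFamily Rs) (f : ρ → ρ) :
    IsCutFamily fun i => f ⁻¹' Rs i := by
  refine ⟨fun i j hij => ?_, ?_⟩
  · simpa only [← preimage_compl] using (hRs.1 hij).preimage f
  · simp only [← preimage_compl, ← preimage_iUnion, hRs.2, preimage_univ]

theorem IsCutFamily.exists_notMem [Finite ι] {Rs : ι → Set ρ} (hRs : IsCutFamily Rs)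
    (U : Ultrafilter ρ) : ∃ j, Rs j ∉ U ∧ ∀ i, i ≠ j → Rs i ∈ U := by
  obtain ⟨j, hj⟩ : ∃ j, (Rs j)ᶜ ∈ U := Ultrafilter.eventually_exists_iff.1 <|
    .of_forall fun y => mem_iUnion.1 (hRs.2 ▸ mem_univ y)
  refine ⟨j, Ultrafilter.compl_mem_iff_notMem.1 hj, fun i hij => ?_⟩
  by_contra hi
  have := U.inter_mem (Ultrafilter.compl_mem_iff_notMem.2 hi) hj
  rw [disjoint_iff_inter_eq_empty.1 (hRs.1 hij)] at this
  exact U.empty_notMem this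

variable [Fintype ι]

variable (ι) in
def MulticutAdmissible (A : MFormula ρ) : Prop :=
  ∀ (Rs : ι → Set ρ) (Γs : ι → MSeq ρ), IsCutFamily Rs →
    (∀ i, MDeriv ((Rs i, A) ::ₘ Γs i)) → MDeriv (∑ i, Γs i)

theorem MulticutAdmissible.of_forall [Nonempty ι] {A : MFormula ρ} (hA : MulticutAdmissible ι A)
    {Rs : ι → Set ρ} (hRs : IsCutFamily Rs) {Δ : MSeq ρ} (h : ∀ i, MDeriv ((Rs i, A) ::ₘ Δ)) :
    MDeriv Δ := by
  have d := hA Rs (fun _ => Δ) hRs h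
  rw [Finset.sum_const, Finset.card_univ, ← Nat.succ_pred_eq_of_ne_zero Fintype.card_ne_zero] at d
  exact of_succ_nsmul d

theorem sum_of_isAxiomWith {Rs : ι → Set ρ} (hRs : IsCutFamily Rs) {Γs : ι → MSeq ρ} {a : ℕ}
    (h : ∀ i, IsAxiomWith (Γs i) (Rs i, .atom a)) : MDeriv (∑ i, Γs i) := by
  classical
  choose L hL hU hle using h
  have hsub : ∀ i, ∀ S ∈ L i, S ⊆ (Rs i)ᶜ := fun i S hS y hy => hU i ▸ mem_iUnion₂.2 ⟨S, hS, hy⟩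
  refine of_atoms_le (L := Finset.univ.toList.flatMap L) (a := a) ?_ ?_ ?_
  · refine List.pairwise_flatMap.2 ⟨fun i _ => hL i, ?_⟩
    refine (Finset.nodup_toList _).pairwise_of_forall_ne fun i _ j _ hij S hS T hT => ?_
    exact (hRs.1 hij).mono (hsub i S hS) (hsub j T hT)
  · refine eq_univ_of_forall fun y => ?_
    obtain ⟨i, hi⟩ := mem_iUnion.1 (hRs.2 ▸ mem_univ y)
    rw [← hU i] at hi
    obtain ⟨S, hS, hy⟩ := mem_iUnion₂.1 hi
    exact mem_iUnion₂.2 ⟨S, List.mem_flatMap.2 ⟨i, Finset.mem_toList.2 (Finset.mem_univ i), hS⟩, hy⟩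
  · rw [MSeq.atoms_flatMap, Finset.sum_map_toList]
    exact Finset.sum_le_sum fun i _ => hle i

theorem of_introduces_conj [Nonempty ι] {Rs : ι → Set ρ} (hRs : IsCutFamily Rs)
    {U : Ultrafilter ρ} {B C : MFormula ρ} (hB : MulticutAdmissible ι B)
    (hC : MulticutAdmissible ι C) {Δ : MSeq ρ}
    (h : ∀ i, Introduces (fun y => MDeriv (y ::ₘ Δ)) (Rs i, .conj U B C)) : MDeriv Δ := by
  obtain ⟨j, hj, hU⟩ := hRs.exists_notMem U
  have hpos : ∀ i, i ≠ j → MDeriv ((Rs i, B) ::ₘ Δ) ∧ MDeriv ((Rs i, C) ::ₘ Δ) :=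
    fun i hij => ((h i).resolve_left fun hi => hi.1 (hU i hij)).2
  rcases (h j).resolve_right fun hj' => hj hj'.1 with ⟨-, hjB | hjC⟩
  · refine hB.of_forall hRs fun i => ?_
    rcases eq_or_ne i j with rfl | hij
    exacts [hjB, (hpos i hij).1]
  · refine hC.of_forall hRs fun i => ?_
    rcases eq_or_ne i j with rfl | hij
    exacts [hjC, (hpos i hij).2]

theorem sum_of_principal_of_derivH {A : MFormula ρ} {Rs : ι → Set ρ}
    (hA : ∀ Γs : ι → MSeq ρ, (∀ i, IsAxiomWith (Γs i) (Rs i, A) ∨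
      Introduces (fun y => MDeriv (y ::ₘ ∑ j, Γs j)) (Rs i, A)) → MDeriv (∑ j, Γs j))
    (hs : ι → ℕ) (Γs : ι → MSeq ρ) (ks : ι → ℕ)
    (hd : ∀ i, DerivH (hs i) (Γs i + replicate (ks i + 1) (Rs i, A))) : MDeriv (∑ i, Γs i) := by
  classical
  induction hs using WellFoundedLT.induction generalizing Γs ks with
  | _ hs IH =>
  have hsum : ∀ i, ∑ j, Γs j = Γs i + ∑ j ∈ Finset.univ.erase i, Γs j := fun i =>
    (Finset.add_sum_erase _ _ (Finset.mem_univ i)).symm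
  have reduce : ∀ i Θ k, (∃ h' < hs i, DerivH h' (Θ + replicate (k + 1) (Rs i, A))) →
      MDeriv (Θ + ∑ j ∈ Finset.univ.erase i, Γs j) := by
    rintro i Θ k ⟨h', hlt, d⟩
    have := IH (Function.update hs i h') (update_lt_self_iff.2 hlt) (Function.update Γs i Θ)
      (Function.update ks i k) fun j => by
        rcases eq_or_ne j i with rfl | hj
        · simpa using d
        · simpa [hj] using hd j
    rwa [Finset.sum_update_of_mem (Finset.mem_univ i), Finset.sdiff_singleton_eq_erase] at this
  -- the copies left in premise `i` after its principal rule are cut against the other premises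
  have resolve : ∀ i y, (∃ h' < hs i, DerivH h' (y ::ₘ (Γs i + replicate (ks i) (Rs i, A)))) →
      MDeriv (y ::ₘ ∑ j, Γs j) := by
    rintro i y ⟨h', hlt, d⟩
    rw [hsum i, ← cons_add]
    cases hk : ks i with
    | zero => simpa [hk] using d.mderiv.weaken (∑ j ∈ Finset.univ.erase i, Γs j)
    | succ k => exact reduce i _ k ⟨h', hlt, by rw [cons_add, ← hk]; exact d⟩
  by_cases hprin : ∀ i, IsAxiomWith (Γs i) (Rs i, A) ∨ Introduces
      (fun y => ∃ h' < hs i, DerivH h' (y ::ₘ (Γs i + replicate (ks i) (Rs i, A)))) (Rs i, A)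
  · exact hA Γs fun i => (hprin i).imp_right (Introduces.mono (resolve i))
  obtain ⟨i, hi⟩ := not_forall.1 hprin
  rw [hsum i]
  rcases (hd i).classify with hΓ | ⟨x, Γ', hΓ, hstep⟩ | hcontr | hp
  · exact hΓ.weaken _
  · rw [hΓ, cons_add]
    exact Step.mderiv (hstep.mono fun Θ h => by simpa only [add_assoc] using reduce i _ (ks i) h)
  · exact reduce i (Γs i) (ks i + 1) hcontr
  · exact absurd hp hi

theorem sum_of_principal {A : MFormula ρ} {Rs : ι → Set ρ} {Γs : ι → MSeq ρ}
    (hder : ∀ i, MDeriv ((Rs i, A) ::ₘ Γs i))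
    (hA : ∀ Γs : ι → MSeq ρ, (∀ i, IsAxiomWith (Γs i) (Rs i, A) ∨
      Introduces (fun y => MDeriv (y ::ₘ ∑ j, Γs j)) (Rs i, A)) → MDeriv (∑ j, Γs j)) :
    MDeriv (∑ i, Γs i) := by
  choose hs hd using fun i => (hder i).exists_derivH
  exact sum_of_principal_of_derivH hA hs Γs 0 fun i => by
    simpa [← singleton_add, add_comm] using hd i

theorem multicutAdmissible [Nonempty ι] : ∀ A : MFormula ρ, MulticutAdmissible ι A
  | .atom _ => fun _ _ hRs hder => sum_of_principal hder fun _ h =>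
      sum_of_isAxiomWith hRs fun i => (h i).resolve_right fun h => h
  | .neg f B => fun _ _ hRs hder => sum_of_principal hder fun _ h =>
      (multicutAdmissible B).of_forall (hRs.preimage f) fun i => (h i).resolve_left fun h => h
  | .conj _ B C => fun _ _ hRs hder => sum_of_principal hder fun _ h =>
      of_introduces_conj hRs (multicutAdmissible B) (multicutAdmissible C)
        fun i => (h i).resolve_left fun h => h

end Multicut

end MDeriv

end

/-- Multiparty cut (mp-cut) is admissible in MRL. -/
theorem mrl_mp_cut {ρ : Type} (n : ℕ) (hn : 1 ≤ n)
    (Rs : Fin n → Set ρ) (Γs : Fin n → MSeq ρ) (A : MFormula ρ)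
    (hdisj : ∀ i j, i ≠ j → Disjoint (Rs i)ᶜ (Rs j)ᶜ)
    (hcover : (⋃ i, (Rs i)ᶜ) = Set.univ)
    (hder : ∀ i, MDeriv ((Rs i, A) ::ₘ Γs i)) :
    MDeriv (Finset.univ.sum Γs) :=
  have : Nonempty (Fin n) := ⟨⟨0, hn⟩⟩
  MDeriv.multicutAdmissible A Rs Γs ⟨hdisj, hcover⟩ hder
end

section
/- In propositional linear multirole logic LMRL, for every formula A, the singleton sequent ⟨R₀⟩A is derivable, where R₀ is the full set of roles, and moreover a proof can be constructed using only the positive rules (together with the axiom). -/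
/-- Formulas of propositional linear multirole logic over role set `ρ`. -/
inductive LFormula (ρ : Type) : Type where
  | atom : ℕ → LFormula ρ
  | neg  : (ρ → ρ) → LFormula ρ → LFormula ρ
  | conj : Ultrafilter ρ → LFormula ρ → LFormula ρ → LFormula ρ
  | imp  : (ρ → ρ) → Ultrafilter ρ → LFormula ρ → LFormula ρ → LFormula ρ
  | bang : Ultrafilter ρ → LFormula ρ → LFormula ρ

/-- Sequents: multisets of i-formulas `⟨R⟩A`. -/
abbrev LSeq (ρ : Type) := Multiset (Set ρ × LFormula ρ)

/-- An i-formula is a negatively interpreted exponential if it is of the form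
`⟨R⟩!_U A` with `R ∉ U`. -/
def IsNegBang {ρ : Type} (p : Set ρ × LFormula ρ) : Prop :=
  ∃ (R : Set ρ) (U : Ultrafilter ρ) (A : LFormula ρ),
    p = (R, LFormula.bang U A) ∧ R ∉ U

/-- Derivability in propositional LMRL. -/
inductive LDeriv {ρ : Type} : LSeq ρ → Prop where
  | id (a : ℕ) (L : List (Set ρ)) :
      L.Pairwise Disjoint → (⋃ R ∈ L, R) = Set.univ →
      LDeriv (↑(L.map fun R => ((R, LFormula.atom a) : Set ρ × LFormula ρ)) : LSeq ρ)
  | neg (Γ : LSeq ρ) (R : Set ρ) (f : ρ → ρ) (A : LFormula ρ) :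
      LDeriv ((f ⁻¹' R, A) ::ₘ Γ) → LDeriv ((R, LFormula.neg f A) ::ₘ Γ)
  | imp_neg (Γ : LSeq ρ) (R : Set ρ) (f : ρ → ρ) (U : Ultrafilter ρ) (A B : LFormula ρ) :
      R ∉ U → LDeriv ((f ⁻¹' R, A) ::ₘ (R, B) ::ₘ Γ) →
      LDeriv ((R, LFormula.imp f U A B) ::ₘ Γ)
  | imp_pos (Γ₁ Γ₂ : LSeq ρ) (R : Set ρ) (f : ρ → ρ) (U : Ultrafilter ρ) (A B : LFormula ρ) :
      R ∈ U → LDeriv ((f ⁻¹' R, A) ::ₘ Γ₁) → LDeriv ((R, B) ::ₘ Γ₂) →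
      LDeriv ((R, LFormula.imp f U A B) ::ₘ (Γ₁ + Γ₂))
  | conj_neg_l (Γ : LSeq ρ) (R : Set ρ) (U : Ultrafilter ρ) (A B : LFormula ρ) :
      R ∉ U → LDeriv ((R, A) ::ₘ Γ) → LDeriv ((R, LFormula.conj U A B) ::ₘ Γ)
  | conj_neg_r (Γ : LSeq ρ) (R : Set ρ) (U : Ultrafilter ρ) (A B : LFormula ρ) :
      R ∉ U → LDeriv ((R, B) ::ₘ Γ) → LDeriv ((R, LFormula.conj U A B) ::ₘ Γ)
  | conj_pos (Γ : LSeq ρ) (R : Set ρ) (U : Ultrafilter ρ) (A B : LFormula ρ) :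
      R ∈ U → LDeriv ((R, A) ::ₘ Γ) → LDeriv ((R, B) ::ₘ Γ) →
      LDeriv ((R, LFormula.conj U A B) ::ₘ Γ)
  | bang_pos (Γ : LSeq ρ) (R : Set ρ) (U : Ultrafilter ρ) (A : LFormula ρ) :
      R ∈ U → (∀ p ∈ Γ, IsNegBang p) → LDeriv ((R, A) ::ₘ Γ) →
      LDeriv ((R, LFormula.bang U A) ::ₘ Γ)
  | bang_neg_weaken (Γ : LSeq ρ) (R : Set ρ) (U : Ultrafilter ρ) (A : LFormula ρ) :
      R ∉ U → LDeriv Γ → LDeriv ((R, LFormula.bang U A) ::ₘ Γ)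
  | bang_neg_derelict (Γ : LSeq ρ) (R : Set ρ) (U : Ultrafilter ρ) (A : LFormula ρ) :
      R ∉ U → LDeriv ((R, A) ::ₘ Γ) → LDeriv ((R, LFormula.bang U A) ::ₘ Γ)
  | bang_neg_contract (Γ : LSeq ρ) (R : Set ρ) (U : Ultrafilter ρ) (A : LFormula ρ) :
      R ∉ U → LDeriv ((R, LFormula.bang U A) ::ₘ (R, LFormula.bang U A) ::ₘ Γ) →
      LDeriv ((R, LFormula.bang U A) ::ₘ Γ)

/-- Derivability in LMRL using only the axiom and the positive rules
(together with the rule for negation, the sole rule for `¬_f`). -/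
inductive LDerivPos {ρ : Type} : LSeq ρ → Prop where
  | id (a : ℕ) (L : List (Set ρ)) :
      L.Pairwise Disjoint → (⋃ R ∈ L, R) = Set.univ →
      LDerivPos (↑(L.map fun R => ((R, LFormula.atom a) : Set ρ × LFormula ρ)) : LSeq ρ)
  | neg (Γ : LSeq ρ) (R : Set ρ) (f : ρ → ρ) (A : LFormula ρ) :
      LDerivPos ((f ⁻¹' R, A) ::ₘ Γ) → LDerivPos ((R, LFormula.neg f A) ::ₘ Γ)
  | imp_pos (Γ₁ Γ₂ : LSeq ρ) (R : Set ρ) (f : ρ → ρ) (U : Ultrafilter ρ) (A B : LFormula ρ) :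
      R ∈ U → LDerivPos ((f ⁻¹' R, A) ::ₘ Γ₁) → LDerivPos ((R, B) ::ₘ Γ₂) →
      LDerivPos ((R, LFormula.imp f U A B) ::ₘ (Γ₁ + Γ₂))
  | conj_pos (Γ : LSeq ρ) (R : Set ρ) (U : Ultrafilter ρ) (A B : LFormula ρ) :
      R ∈ U → LDerivPos ((R, A) ::ₘ Γ) → LDerivPos ((R, B) ::ₘ Γ) →
      LDerivPos ((R, LFormula.conj U A B) ::ₘ Γ)
  | bang_pos (Γ : LSeq ρ) (R : Set ρ) (U : Ultrafilter ρ) (A : LFormula ρ) :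
      R ∈ U → (∀ p ∈ Γ, IsNegBang p) → LDerivPos ((R, A) ::ₘ Γ) →
      LDerivPos ((R, LFormula.bang U A) ::ₘ Γ)


theorem LDerivPos.toLDeriv {ρ : Type} {Γ : LSeq ρ} (h : LDerivPos Γ) : LDeriv Γ := by
  induction h with
  | id a L hd hu => exact LDeriv.id a L hd hu
  | neg Γ R f A _ ih => exact LDeriv.neg Γ R f A ih
  | imp_pos Γ₁ Γ₂ R f U A B hm _ _ ih1 ih2 => exact LDeriv.imp_pos Γ₁ Γ₂ R f U A B hm ih1 ih2
  | conj_pos Γ R U A B hm _ _ ih1 ih2 => exact LDeriv.conj_pos Γ R U A B hm ih1 ih2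
  | bang_pos Γ R U A hm hb _ ih => exact LDeriv.bang_pos Γ R U A hm hb ih

theorem lmrl_pos {ρ : Type} (A : LFormula ρ) :
    LDerivPos ((Set.univ, A) ::ₘ (0 : LSeq ρ)) := by
  induction A with
  | atom a =>
      have := LDerivPos.id (ρ := ρ) a [Set.univ] (by simp) (by simp)
      simpa using this
  | neg f A ih =>
      have : f ⁻¹' (Set.univ : Set ρ) = Set.univ := Set.preimage_univ
      exact LDerivPos.neg 0 Set.univ f A (by rw [this]; exact ih)
  | conj U A B ihA ihB =>
      exact LDerivPos.conj_pos 0 Set.univ U A B Filter.univ_mem ihA ihB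
  | imp f U A B ihA ihB =>
      have h := LDerivPos.imp_pos (0 : LSeq ρ) 0 Set.univ f U A B Filter.univ_mem
        (by rw [Set.preimage_univ]; exact ihA) ihB
      simpa using h
  | bang U A ih =>
      exact LDerivPos.bang_pos 0 Set.univ U A Filter.univ_mem (by simp) ih

/-- ⟨R₀⟩A is derivable in LMRL as a singleton sequent, and moreover
a proof can be constructed using only the positive rules together with the axiom. -/
theorem lmrl_full_set {ρ : Type} (A : LFormula ρ) :
    LDeriv ((Set.univ, A) ::ₘ (0 : LSeq ρ)) ∧
    LDerivPos ((Set.univ, A) ::ₘ (0 : LSeq ρ)) := by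
  exact ⟨(lmrl_pos A).toLDeriv, lmrl_pos A⟩
end

section
/- In propositional linear multirole logic LMRL, 1-cut is admissible with a height bound: if Γ, ⟨∅⟩A has a derivation D, then Γ has a derivation D' with height(D') ≤ height(D). -/
/-- `LDerivH Γ n` : the sequent Γ has an LMRL derivation of tree height at most `n`. -/
inductive LDerivH {ρ : Type} : LSeq ρ → ℕ → Prop where
  | id (a : ℕ) (L : List (Set ρ)) (n : ℕ) :
      L.Pairwise Disjoint → (⋃ R ∈ L, R) = Set.univ →
      LDerivH (↑(L.map fun R => ((R, LFormula.atom a) : Set ρ × LFormula ρ)) : LSeq ρ) (n + 1)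
  | neg (Γ : LSeq ρ) (R : Set ρ) (f : ρ → ρ) (A : LFormula ρ) (n : ℕ) :
      LDerivH ((f ⁻¹' R, A) ::ₘ Γ) n → LDerivH ((R, LFormula.neg f A) ::ₘ Γ) (n + 1)
  | imp_neg (Γ : LSeq ρ) (R : Set ρ) (f : ρ → ρ) (U : Ultrafilter ρ) (A B : LFormula ρ) (n : ℕ) :
      R ∉ U → LDerivH ((f ⁻¹' R, A) ::ₘ (R, B) ::ₘ Γ) n →
      LDerivH ((R, LFormula.imp f U A B) ::ₘ Γ) (n + 1)
  | imp_pos (Γ₁ Γ₂ : LSeq ρ) (R : Set ρ) (f : ρ → ρ) (U : Ultrafilter ρ) (A B : LFormula ρ) (n : ℕ) :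
      R ∈ U → LDerivH ((f ⁻¹' R, A) ::ₘ Γ₁) n → LDerivH ((R, B) ::ₘ Γ₂) n →
      LDerivH ((R, LFormula.imp f U A B) ::ₘ (Γ₁ + Γ₂)) (n + 1)
  | conj_neg_l (Γ : LSeq ρ) (R : Set ρ) (U : Ultrafilter ρ) (A B : LFormula ρ) (n : ℕ) :
      R ∉ U → LDerivH ((R, A) ::ₘ Γ) n → LDerivH ((R, LFormula.conj U A B) ::ₘ Γ) (n + 1)
  | conj_neg_r (Γ : LSeq ρ) (R : Set ρ) (U : Ultrafilter ρ) (A B : LFormula ρ) (n : ℕ) :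
      R ∉ U → LDerivH ((R, B) ::ₘ Γ) n → LDerivH ((R, LFormula.conj U A B) ::ₘ Γ) (n + 1)
  | conj_pos (Γ : LSeq ρ) (R : Set ρ) (U : Ultrafilter ρ) (A B : LFormula ρ) (n : ℕ) :
      R ∈ U → LDerivH ((R, A) ::ₘ Γ) n → LDerivH ((R, B) ::ₘ Γ) n →
      LDerivH ((R, LFormula.conj U A B) ::ₘ Γ) (n + 1)
  | bang_pos (Γ : LSeq ρ) (R : Set ρ) (U : Ultrafilter ρ) (A : LFormula ρ) (n : ℕ) :
      R ∈ U → (∀ p ∈ Γ, IsNegBang p) → LDerivH ((R, A) ::ₘ Γ) n →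
      LDerivH ((R, LFormula.bang U A) ::ₘ Γ) (n + 1)
  | bang_neg_weaken (Γ : LSeq ρ) (R : Set ρ) (U : Ultrafilter ρ) (A : LFormula ρ) (n : ℕ) :
      R ∉ U → LDerivH Γ n → LDerivH ((R, LFormula.bang U A) ::ₘ Γ) (n + 1)
  | bang_neg_derelict (Γ : LSeq ρ) (R : Set ρ) (U : Ultrafilter ρ) (A : LFormula ρ) (n : ℕ) :
      R ∉ U → LDerivH ((R, A) ::ₘ Γ) n → LDerivH ((R, LFormula.bang U A) ::ₘ Γ) (n + 1)
  | bang_neg_contract (Γ : LSeq ρ) (R : Set ρ) (U : Ultrafilter ρ) (A : LFormula ρ) (n : ℕ) :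
      R ∉ U → LDerivH ((R, LFormula.bang U A) ::ₘ (R, LFormula.bang U A) ::ₘ Γ) n →
      LDerivH ((R, LFormula.bang U A) ::ₘ Γ) (n + 1)
  | mono (Γ : LSeq ρ) (n : ℕ) : LDerivH Γ n → LDerivH Γ (n + 1)

/-! Induction on the height. Since `∅` belongs to no ultrafilter, `⟨∅⟩A` can be principal only
in an axiom (as an empty cell of the partition) or in a negative rule; in the latter case every
active formula of the premise is again labelled by `∅` (as `f ⁻¹' ∅ = ∅`), and the induction
hypothesis removes all of them at the premise height. If `⟨∅⟩A` is a side formula, it is removed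
from the premises by the induction hypothesis and the rule is applied again. -/

theorem List.foldr_multisetCons_cons {α : Type*} (l : List α) (a : α) (s : Multiset α) :
    l.foldr (· ::ₘ ·) (a ::ₘ s) = a ::ₘ l.foldr (· ::ₘ ·) s := by
  induction l with
  | nil => rfl
  | cons b l ih => simp only [List.foldr_cons, ih, Multiset.cons_swap]

theorem Multiset.add_eq_cons_cases {α : Type*} {a : α} {s t u : Multiset α}
    (h : s + t = a ::ₘ u) :
    (∃ s', s = a ::ₘ s' ∧ u = s' + t) ∨ ∃ t', t = a ::ₘ t' ∧ u = s + t' := by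
  rcases Multiset.mem_add.1 (h ▸ Multiset.mem_cons_self a u) with hs | ht
  · obtain ⟨s', rfl⟩ := Multiset.exists_cons_of_mem hs
    exact .inl ⟨s', rfl, (Multiset.cons_inj_right a).1 (by rw [← h, Multiset.cons_add])⟩
  · obtain ⟨t', rfl⟩ := Multiset.exists_cons_of_mem ht
    exact .inr ⟨t', rfl, (Multiset.cons_inj_right a).1 (by rw [← h, Multiset.add_cons])⟩

section OneCut

variable {ρ : Type}

theorem exists_eq_cons_of_cons_eq_cons_of_mem_ultrafilter {R : Set ρ} {U : Ultrafilter ρ}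
    (hR : R ∈ U) {B A : LFormula ρ} {Γ' Γ : LSeq ρ} (h : (∅, A) ::ₘ Γ = (R, B) ::ₘ Γ') :
    ∃ Θ, Γ = (R, B) ::ₘ Θ ∧ Γ' = (∅, A) ::ₘ Θ := by
  rcases Multiset.cons_eq_cons.1 h with ⟨hhead, -⟩ | ⟨-, hΘ⟩
  · exact absurd ((Prod.mk.inj hhead).1 ▸ hR) Ultrafilter.empty_notMem
  · exact hΘ

theorem LDerivH.id_of_cons_eq {a : ℕ} {L : List (Set ρ)} (n : ℕ) (hdis : L.Pairwise Disjoint)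
    (hcover : (⋃ R ∈ L, R) = Set.univ) {A : LFormula ρ} {Γ : LSeq ρ}
    (h : (∅, A) ::ₘ Γ = ↑(L.map fun R => ((R, LFormula.atom a) : Set ρ × LFormula ρ))) :
    LDerivH Γ (n + 1) := by
  obtain ⟨R, hR, hRA⟩ := List.mem_map.1 (Multiset.mem_coe.1 (h ▸ Multiset.mem_cons_self _ Γ))
  obtain ⟨rfl, rfl⟩ := Prod.mk.inj hRA
  have hperm := List.perm_cons_erase hR
  have hΓ : Γ = ↑((L.erase ∅).map fun R => ((R, LFormula.atom a) : Set ρ × LFormula ρ)) := by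
    rw [← Multiset.cons_inj_right (∅, LFormula.atom a), h]
    exact Multiset.coe_eq_coe.2 (hperm.map _)
  subst hΓ
  refine LDerivH.id a _ n (hdis.sublist List.erase_sublist) ?_
  rw [← hcover]
  ext x
  simp [hperm.mem_iff]

def EmptyCutAdmissible (ρ : Type) (n : ℕ) : Prop :=
  ∀ (Γ : LSeq ρ) (A : LFormula ρ), LDerivH ((∅, A) ::ₘ Γ) n → LDerivH Γ n

namespace EmptyCutAdmissible

variable {m : ℕ}

theorem zero : EmptyCutAdmissible ρ 0 := by
  intro Γ A h
  generalize (∅, A) ::ₘ Γ = Δ at h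
  cases h

theorem erase_foldr (ih : EmptyCutAdmissible ρ m) {Q : List (Set ρ × LFormula ρ)} {Γ : LSeq ρ}
    (hQ : ∀ q ∈ Q, q.1 = ∅) (h : LDerivH (Q.foldr (· ::ₘ ·) Γ) m) : LDerivH Γ m := by
  induction Q with
  | nil => exact h
  | cons q Q hind =>
    obtain ⟨R, B⟩ := q
    obtain rfl : R = ∅ := hQ _ List.mem_cons_self
    exact hind (fun q hq => hQ q (List.mem_cons_of_mem _ hq)) (ih _ B h)

/-- The active formulas of a premise are listed as `Q` and pushed onto the context by `foldr`,
so that every rule's premise is this expression up to definitional unfolding. -/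
theorem succ_of_unary_rule (ih : EmptyCutAdmissible ρ m) {p : Set ρ × LFormula ρ}
    {Q : List (Set ρ × LFormula ρ)} {Γ' Γ : LSeq ρ} {A : LFormula ρ}
    (rule : ∀ Θ, LDerivH (Q.foldr (· ::ₘ ·) Θ) m → LDerivH (p ::ₘ Θ) (m + 1))
    (hQ : p.1 = ∅ → ∀ q ∈ Q, q.1 = ∅) (heq : (∅, A) ::ₘ Γ = p ::ₘ Γ')
    (h : LDerivH (Q.foldr (· ::ₘ ·) Γ') m) : LDerivH Γ (m + 1) := by
  rcases Multiset.cons_eq_cons.1 heq with ⟨rfl, rfl⟩ | ⟨-, Θ, hΓ, rfl⟩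
  · exact .mono _ _ (ih.erase_foldr (hQ rfl) h)
  · rw [List.foldr_multisetCons_cons] at h
    exact hΓ ▸ rule Θ (ih _ A h)

theorem succ_of_imp_pos (ih : EmptyCutAdmissible ρ m) {R : Set ρ} {f : ρ → ρ} {U : Ultrafilter ρ}
    (hU : R ∈ U) {A B C : LFormula ρ} {Γ Γ₁ Γ₂ : LSeq ρ}
    (heq : (∅, A) ::ₘ Γ = (R, .imp f U B C) ::ₘ (Γ₁ + Γ₂))
    (h₁ : LDerivH ((f ⁻¹' R, B) ::ₘ Γ₁) m) (h₂ : LDerivH ((R, C) ::ₘ Γ₂) m) :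
    LDerivH Γ (m + 1) := by
  obtain ⟨Θ, rfl, hsplit⟩ := exists_eq_cons_of_cons_eq_cons_of_mem_ultrafilter hU heq
  rcases Multiset.add_eq_cons_cases hsplit with ⟨Γ₁', rfl, rfl⟩ | ⟨Γ₂', rfl, rfl⟩
  · rw [Multiset.cons_swap] at h₁
    exact .imp_pos _ _ _ _ _ _ _ _ hU (ih _ A h₁) h₂
  · rw [Multiset.cons_swap] at h₂
    exact .imp_pos _ _ _ _ _ _ _ _ hU h₁ (ih _ A h₂)

theorem succ (ih : EmptyCutAdmissible ρ m) : EmptyCutAdmissible ρ (m + 1) := by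
  intro Γ A h
  generalize hΔ : (∅, A) ::ₘ Γ = Δ at h
  cases h with
  | id a L _ hdis hcover => exact LDerivH.id_of_cons_eq m hdis hcover hΔ
  | mono _ _ h => exact .mono _ _ (ih Γ A (hΔ ▸ h))
  | neg Γ' R f B _ h =>
    exact ih.succ_of_unary_rule (Q := [(f ⁻¹' R, B)]) (fun _ => .neg _ _ _ _ _)
      (by simp +contextual) hΔ h
  | imp_neg Γ' R f U B C _ hU h =>
    exact ih.succ_of_unary_rule (Q := [(f ⁻¹' R, B), (R, C)]) (fun _ => .imp_neg _ _ _ _ _ _ _ hU)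
      (by simp +contextual) hΔ h
  | conj_neg_l Γ' R U B C _ hU h =>
    exact ih.succ_of_unary_rule (Q := [(R, B)]) (fun _ => .conj_neg_l _ _ _ _ _ _ hU)
      (by simp +contextual) hΔ h
  | conj_neg_r Γ' R U B C _ hU h =>
    exact ih.succ_of_unary_rule (Q := [(R, C)]) (fun _ => .conj_neg_r _ _ _ _ _ _ hU)
      (by simp +contextual) hΔ h
  | bang_neg_weaken Γ' R U B _ hU h =>
    exact ih.succ_of_unary_rule (Q := []) (fun _ => .bang_neg_weaken _ _ _ _ _ hU)
      (by simp) hΔ h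
  | bang_neg_derelict Γ' R U B _ hU h =>
    exact ih.succ_of_unary_rule (Q := [(R, B)]) (fun _ => .bang_neg_derelict _ _ _ _ _ hU)
      (by simp +contextual) hΔ h
  | bang_neg_contract Γ' R U B _ hU h =>
    exact ih.succ_of_unary_rule (Q := [(R, .bang U B), (R, .bang U B)])
      (fun _ => .bang_neg_contract _ _ _ _ _ hU) (by simp +contextual) hΔ h
  | imp_pos Γ₁ Γ₂ R f U B C _ hU h₁ h₂ => exact ih.succ_of_imp_pos hU hΔ h₁ h₂
  | conj_pos Γ' R U B C _ hU h₁ h₂ =>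
    obtain ⟨Θ, rfl, rfl⟩ := exists_eq_cons_of_cons_eq_cons_of_mem_ultrafilter hU hΔ
    rw [Multiset.cons_swap] at h₁ h₂
    exact .conj_pos _ _ _ _ _ _ hU (ih _ A h₁) (ih _ A h₂)
  | bang_pos Γ' R U B _ hU hnb h =>
    obtain ⟨Θ, rfl, rfl⟩ := exists_eq_cons_of_cons_eq_cons_of_mem_ultrafilter hU hΔ
    rw [Multiset.cons_swap] at h
    exact .bang_pos _ _ _ _ _ hU (fun p hp => hnb p (Multiset.mem_cons_of_mem hp)) (ih _ A h)

end EmptyCutAdmissible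

end OneCut

theorem emptyCutAdmissible (ρ : Type) : ∀ n, EmptyCutAdmissible ρ n
  | 0 => .zero
  | n + 1 => (emptyCutAdmissible ρ n).succ

/-- 1-cut in LMRL is admissible with a height bound: any derivation of Γ, ⟨∅⟩A of
height at most n yields a derivation of Γ of height at most n. -/
theorem lmrl_one_cut_height {ρ : Type} (Γ : LSeq ρ) (A : LFormula ρ) (n : ℕ)
    (h : LDerivH ((∅, A) ::ₘ Γ) n) : LDerivH Γ n :=
  emptyCutAdmissible ρ n Γ A h
end
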